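/- arXiv:1901.03567 — 5 statements merged into one kernel-verified Lean document; each statement's English description precedes it below -/
import Mathlib

section
/- Let C be a Cauchy complete category and let (C, D) be a display map category which models Σ-types and functorial Id-types. Then (C, D̄) is again a display map category which models Σ-types and functorial Id-types, where D̄ = (^⧄D)^⧄. -/
open CategoryTheory Limits

universe v u

namespace DMCPaper

variable {C : Type u} [Category.{v} C]

/-- The class of morphisms with the left lifting property against every morphism of `M`. -/
def Llp (M : MorphismProperty C) : MorphismProperty C :=
  fun _ _ f => ∀ ⦃U V : C⦄ (g : U ⟶ V), M g → HasLiftingProperty f g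

/-- The class of morphisms with the right lifting property against every morphism of `M`. -/
def Rlp (M : MorphismProperty C) : MorphismProperty C :=
  fun _ _ f => ∀ ⦃U V : C⦄ (g : U ⟶ V), M g → HasLiftingProperty g f

/-- `D̄ = (^⧄D)^⧄`. -/
def Bar (D : MorphismProperty C) : MorphismProperty C := Rlp (Llp D)

/-- `(C, D)` is a display map category. -/
structure IsDisplayMapCategory (D : MorphismProperty C) : Prop where
  hasTerminal : HasTerminal C
  mem_of_isIso : ∀ ⦃X Y : C⦄ (f : X ⟶ Y), IsIso f → D f
  mem_of_isTerminal : ∀ ⦃X Y : C⦄ (f : X ⟶ Y), IsTerminal Y → D f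
  hasPullback : ∀ ⦃X Y A : C⦄ (d : X ⟶ Y) (α : A ⟶ Y), D d → HasPullback α d
  stable : ∀ ⦃P A X Y : C⦄ (h : P ⟶ A) (k : P ⟶ X) (α : A ⟶ Y) (d : X ⟶ Y),
      IsPullback h k α d → D d → D h

/-- `(C, D)` models `Σ`-types: `D` is closed under composition. -/
def ModelsSigma (D : MorphismProperty C) : Prop :=
  ∀ ⦃X Y Z : C⦄ (f : X ⟶ Y) (g : Y ⟶ Z), D f → D g → D (f ≫ g)

/-- `(C, D)` models (Paulin-Mohring) `Id`-types. -/
def ModelsId (D : MorphismProperty C) : Prop :=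
  ∀ ⦃X Y : C⦄ (f : X ⟶ Y), D f →
    ∃ (P : C) (π₀ π₁ : P ⟶ X) (hP : IsPullback π₀ π₁ f f)
      (I : C) (r : X ⟶ I) (ε : I ⟶ P),
      r ≫ ε = hP.lift (𝟙 X) (𝟙 X) rfl ∧ D ε ∧
      ∀ (π : P ⟶ X), (π = π₀ ∨ π = π₁) →
        ∀ ⦃A : C⦄ (α : A ⟶ X) ⦃Q : C⦄ (p : Q ⟶ A) (q : Q ⟶ I),
          IsPullback p q α (ε ≫ π) →
          ∀ (l : A ⟶ Q), l ≫ p = 𝟙 A → l ≫ q = α ≫ r → Llp D l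

/-- Functorial `Id`-type structure on a display map category. -/
structure FunctorialIdData (D : MorphismProperty C) where
  P : ∀ ⦃X Y : C⦄ (f : X ⟶ Y), D f → C
  π₀ : ∀ ⦃X Y : C⦄ (f : X ⟶ Y) (hf : D f), P f hf ⟶ X
  π₁ : ∀ ⦃X Y : C⦄ (f : X ⟶ Y) (hf : D f), P f hf ⟶ X
  isPullback : ∀ ⦃X Y : C⦄ (f : X ⟶ Y) (hf : D f), IsPullback (π₀ f hf) (π₁ f hf) f f
  I : ∀ ⦃X Y : C⦄ (f : X ⟶ Y), D f → C
  r : ∀ ⦃X Y : C⦄ (f : X ⟶ Y) (hf : D f), X ⟶ I f hf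
  ε : ∀ ⦃X Y : C⦄ (f : X ⟶ Y) (hf : D f), I f hf ⟶ P f hf
  fact : ∀ ⦃X Y : C⦄ (f : X ⟶ Y) (hf : D f),
    r f hf ≫ ε f hf = (isPullback f hf).lift (𝟙 X) (𝟙 X) rfl
  ε_mem : ∀ ⦃X Y : C⦄ (f : X ⟶ Y) (hf : D f), D (ε f hf)
  lp : ∀ ⦃X Y : C⦄ (f : X ⟶ Y) (hf : D f) (π : P f hf ⟶ X),
    (π = π₀ f hf ∨ π = π₁ f hf) →
    ∀ ⦃A : C⦄ (α : A ⟶ X) ⦃Q : C⦄ (p : Q ⟶ A) (q : Q ⟶ I f hf),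
      IsPullback p q α (ε f hf ≫ π) →
      ∀ (l : A ⟶ Q), l ≫ p = 𝟙 A → l ≫ q = α ≫ r f hf → Llp D l
  map : ∀ ⦃Y X X' : C⦄ (f : X ⟶ Y) (f' : X' ⟶ Y) (hf : D f) (hf' : D f')
    (u : X ⟶ X'), u ≫ f' = f → (I f hf ⟶ I f' hf')
  map_r : ∀ ⦃Y X X' : C⦄ (f : X ⟶ Y) (f' : X' ⟶ Y) (hf : D f) (hf' : D f')
    (u : X ⟶ X') (hu : u ≫ f' = f),
    r f hf ≫ map f f' hf hf' u hu = u ≫ r f' hf'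
  map_ε : ∀ ⦃Y X X' : C⦄ (f : X ⟶ Y) (f' : X' ⟶ Y) (hf : D f) (hf' : D f')
    (u : X ⟶ X') (hu : u ≫ f' = f),
    map f f' hf hf' u hu ≫ ε f' hf' =
      ε f hf ≫ (isPullback f' hf').lift (π₀ f hf ≫ u) (π₁ f hf ≫ u)
        (by rw [Category.assoc, Category.assoc, hu]; exact (isPullback f hf).w)
  map_id : ∀ ⦃X Y : C⦄ (f : X ⟶ Y) (hf : D f),
    map f f hf hf (𝟙 X) (Category.id_comp f) = 𝟙 (I f hf)
  map_comp : ∀ ⦃Y X X' X'' : C⦄ (f : X ⟶ Y) (f' : X' ⟶ Y) (f'' : X'' ⟶ Y)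
    (hf : D f) (hf' : D f') (hf'' : D f'')
    (u : X ⟶ X') (hu : u ≫ f' = f) (v : X' ⟶ X'') (hv : v ≫ f'' = f'),
    map f f'' hf hf'' (u ≫ v) (by rw [Category.assoc, hv, hu]) =
      map f f' hf hf' u hu ≫ map f' f'' hf' hf'' v hv

/-- `(C, D)` models functorial `Id`-types. -/
def ModelsFunctorialId (D : MorphismProperty C) : Prop :=
  Nonempty (FunctorialIdData D)

/-- `(C, D)` models `Π`-types. -/
def ModelsPi (D : MorphismProperty C) : Prop :=
  ∀ ⦃W X Y : C⦄ (g : W ⟶ X) (f : X ⟶ Y), D g → D f →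
    ∃ (PI : C) (pf : PI ⟶ Y), D pf ∧
      ∃ φ : ∀ ⦃A Q : C⦄ (y : A ⟶ Y) (a : Q ⟶ A) (q : Q ⟶ X),
          IsPullback a q y f →
          ({u : A ⟶ PI // u ≫ pf = y} ≃ {v : Q ⟶ W // v ≫ g = q}),
        ∀ ⦃A A' Q Q' : C⦄ (y : A ⟶ Y) (y' : A' ⟶ Y) (t : A ⟶ A') (ht : t ≫ y' = y)
          (a : Q ⟶ A) (q : Q ⟶ X) (hQ : IsPullback a q y f)
          (a' : Q' ⟶ A') (q' : Q' ⟶ X) (hQ' : IsPullback a' q' y' f)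
          (s : Q ⟶ Q'), s ≫ a' = a ≫ t → s ≫ q' = q →
          ∀ (u' : A' ⟶ PI) (hu' : u' ≫ pf = y'),
            (φ y a q hQ ⟨t ≫ u', by rw [Category.assoc, hu', ht]⟩).1 =
              s ≫ (φ y' a' q' hQ' ⟨u', hu'⟩).1

/-- `(L, R)` is a weak factorization system on `C`. -/
def IsWFS (L R : MorphismProperty C) : Prop :=
  (∀ ⦃X Y : C⦄ (f : X ⟶ Y), ∃ (Z : C) (l : X ⟶ Z) (ρ : Z ⟶ Y), L l ∧ R ρ ∧ l ≫ ρ = f)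
  ∧ L = Llp R ∧ R = Rlp L

/-- `f` is a retract of `g` in the arrow category `C^2`. -/
def IsRetractOf {X Y U V : C} (f : X ⟶ Y) (g : U ⟶ V) : Prop :=
  ∃ (iX : X ⟶ U) (iY : Y ⟶ V) (rX : U ⟶ X) (rY : V ⟶ Y),
    iX ≫ g = f ≫ iY ∧ rX ≫ f = g ≫ rY ∧ iX ≫ rX = 𝟙 X ∧ iY ≫ rY = 𝟙 Y

/-- `(C, D)` models the formation and introduction rules of `Id`-types. -/
def ModelsFormIntro (D : MorphismProperty C) : Prop :=
  ∀ ⦃A Γ : C⦄ (d : A ⟶ Γ), D d →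
    ∃ (P : C) (π₀ π₁ : P ⟶ A) (hP : IsPullback π₀ π₁ d d)
      (I : C) (r : A ⟶ I) (ε : I ⟶ P),
      r ≫ ε = hP.lift (𝟙 A) (𝟙 A) rfl ∧ D ε

/-- `(C, D)` models Paulin-Mohring `Id`-types. -/
def ModelsPaulinMohringId (D : MorphismProperty C) : Prop :=
  ∀ ⦃A Γ : C⦄ (d : A ⟶ Γ), D d →
    ∃ (P : C) (π₀ π₁ : P ⟶ A) (hP : IsPullback π₀ π₁ d d)
      (I : C) (r : A ⟶ I) (ε : I ⟶ P),
      r ≫ ε = hP.lift (𝟙 A) (𝟙 A) rfl ∧ D ε ∧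
      ∀ (π : P ⟶ A), (π = π₀ ∨ π = π₁) →
        ∀ ⦃Δ : C⦄ (σ : Δ ⟶ A) ⦃Q : C⦄ (p : Q ⟶ Δ) (q : Q ⟶ I),
          IsPullback p q σ (ε ≫ π) →
          ∀ (l : Δ ⟶ Q), l ≫ p = 𝟙 Δ → l ≫ q = σ ≫ r → Llp D l

/-- `(C, D)` models parametrized Martin-Löf `Id`-types (which includes the
plain Martin-Löf elimination). -/
def ModelsParamMLId (D : MorphismProperty C) : Prop :=
  ∀ ⦃A Γ : C⦄ (d : A ⟶ Γ), D d →
    ∃ (P : C) (π₀ π₁ : P ⟶ A) (hP : IsPullback π₀ π₁ d d)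
      (I : C) (r : A ⟶ I) (ε : I ⟶ P),
      r ≫ ε = hP.lift (𝟙 A) (𝟙 A) rfl ∧ D ε ∧
      ∀ ⦃Δ : C⦄ (σ : Δ ⟶ Γ)
        ⦃A₀ : C⦄ (pA : A₀ ⟶ Δ) (qA : A₀ ⟶ A), IsPullback pA qA σ d →
        ∀ ⦃Q : C⦄ (pI : Q ⟶ Δ) (qI : Q ⟶ I), IsPullback pI qI σ (ε ≫ π₀ ≫ d) →
        ∀ (m : A₀ ⟶ Q), m ≫ pI = pA → m ≫ qI = qA ≫ r →
          Llp D m ∧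
          ∀ ⦃Θ : C⦄ (θ : Θ ⟶ Q), D θ →
            ∀ ⦃E : C⦄ (e₁ : E ⟶ Θ) (e₂ : E ⟶ A₀), IsPullback e₁ e₂ θ m → Llp D e₁

/-- `^⧄D` is stable under pullback along morphisms of `D`. -/
def LlpStableUnderPullbackAlongD (D : MorphismProperty C) : Prop :=
  ∀ ⦃P A X Y : C⦄ (h : P ⟶ A) (k : P ⟶ X) (d : A ⟶ Y) (l : X ⟶ Y),
    IsPullback h k d l → D d → Llp D l → Llp D h



section Aux

variable {D : MorphismProperty C}

lemma mem_bar_of_mem {X Y : C} {f : X ⟶ Y} (hf : D f) : Bar D f :=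
  fun _ _ g hg => hg f hf

lemma llp_bar_of_llp {X Y : C} {f : X ⟶ Y} (hf : Llp D f) : Llp (Bar D) f :=
  fun _ _ g hg => hg f hf

lemma llp_of_retract {X Y U V : C} {f : X ⟶ Y} {g : U ⟶ V}
    (h : IsRetractOf f g) (hg : Llp D g) : Llp D f := by
  obtain ⟨iX, iY, rX, rY, h1, h2, h3, h4⟩ := h
  intro A B p hp
  haveI := hg p hp
  constructor
  intro a b sq
  have sq2 : CommSq (rX ≫ a) g p (rY ≫ b) :=
    ⟨by rw [Category.assoc, sq.w, ← Category.assoc, h2, Category.assoc]⟩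
  exact ⟨⟨⟨iY ≫ sq2.lift,
    by rw [← Category.assoc, ← h1, Category.assoc, sq2.fac_left, ← Category.assoc, h3,
      Category.id_comp],
    by rw [Category.assoc, sq2.fac_right, ← Category.assoc, h4, Category.id_comp]⟩⟩⟩

lemma bar_of_retract {X Y U V : C} {f : X ⟶ Y} {g : U ⟶ V}
    (h : IsRetractOf f g) (hg : Bar D g) : Bar D f := by
  obtain ⟨iX, iY, rX, rY, h1, h2, h3, h4⟩ := h
  intro A B p hp
  haveI := hg p hp
  constructor
  intro a b sq
  have sq2 : CommSq (a ≫ iX) p g (b ≫ iY) :=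
    ⟨by rw [Category.assoc, h1, ← Category.assoc, sq.w, Category.assoc]⟩
  exact ⟨⟨⟨sq2.lift ≫ rX,
    by rw [← Category.assoc, sq2.fac_left, Category.assoc, h3, Category.comp_id],
    by rw [Category.assoc, h2, ← Category.assoc, sq2.fac_right, Category.assoc, h4,
      Category.comp_id]⟩⟩⟩

lemma bar_stable {P A X Y : C} (h : P ⟶ A) (k : P ⟶ X) (α : A ⟶ Y) (d : X ⟶ Y)
    (hP : IsPullback h k α d) (hd : Bar D d) : Bar D h := by
  intro U V g hg
  haveI := hd g hg
  constructor
  intro a b sq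
  have sq2 : CommSq (a ≫ k) g d (b ≫ α) :=
    ⟨by rw [Category.assoc, ← hP.w, ← Category.assoc, sq.w, Category.assoc]⟩
  refine ⟨⟨⟨hP.lift b sq2.lift (by rw [sq2.fac_right]), ?_, hP.lift_fst _ _ _⟩⟩⟩
  · apply hP.hom_ext
    · rw [Category.assoc, hP.lift_fst, sq.w]
    · rw [Category.assoc, hP.lift_snd, sq2.fac_left]

end Aux
section Aux2

variable {D : MorphismProperty C}

lemma map_congr (data : FunctorialIdData D) {Y X X' : C} (f : X ⟶ Y) (f' : X' ⟶ Y)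
    (hf : D f) (hf' : D f') {u v : X ⟶ X'} (huv : u = v) (hu : u ≫ f' = f) :
    data.map f f' hf hf' u hu = data.map f f' hf hf' v (huv ▸ hu) := by
  subst huv; rfl

lemma fact_exists (hDMC : IsDisplayMapCategory D) (hSigma : ModelsSigma D)
    (data : FunctorialIdData D) {X Y : C} (f : X ⟶ Y) :
    ∃ (Z : C) (l : X ⟶ Z) (e : Z ⟶ Y), Llp D l ∧ D e ∧ l ≫ e = f := by
  haveI := hDMC.hasTerminal
  set tY : Y ⟶ ⊤_ C := terminal.from Y with htYdef
  have htY : D tY := hDMC.mem_of_isTerminal tY terminalIsTerminal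
  set π₀ := data.π₀ tY htY
  set π₁ := data.π₁ tY htY
  have hPT := data.isPullback tY htY
  set r := data.r tY htY
  set ε := data.ε tY htY
  have hπ₀ : D π₀ := hDMC.stable π₀ π₁ tY tY hPT htY
  have hπ₁ : D π₁ := hDMC.stable π₁ π₀ tY tY hPT.flip htY
  have hεπ₀ : D (ε ≫ π₀) := hSigma ε π₀ (data.ε_mem tY htY) hπ₀
  haveI hMf : HasPullback f (ε ≫ π₀) := hDMC.hasPullback (ε ≫ π₀) f hεπ₀
  set Mf := pullback f (ε ≫ π₀)
  set mfst := pullback.fst f (ε ≫ π₀)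
  set msnd := pullback.snd f (ε ≫ π₀)
  have hrε : r ≫ ε ≫ π₀ = 𝟙 Y := by
    rw [← Category.assoc, data.fact tY htY, hPT.lift_fst]
  have hrε₁ : r ≫ ε ≫ π₁ = 𝟙 Y := by
    rw [← Category.assoc, data.fact tY htY, hPT.lift_snd]
  have hl : 𝟙 X ≫ f = (f ≫ r) ≫ ε ≫ π₀ := by
    rw [Category.id_comp, Category.assoc, hrε, Category.comp_id]
  set lX : X ⟶ Mf := pullback.lift (𝟙 X) (f ≫ r) hl
  have hlX : Llp D lX :=
    data.lp tY htY π₀ (Or.inl rfl) f mfst msnd (IsPullback.of_hasPullback f (ε ≫ π₀)) lX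
      (pullback.lift_fst _ _ _) (pullback.lift_snd _ _ _)
  -- the product X × Y
  set tX : X ⟶ ⊤_ C := terminal.from X
  have htX : D tX := hDMC.mem_of_isTerminal tX terminalIsTerminal
  haveI : HasPullback tX tY := hDMC.hasPullback tY tX htY
  set pX := pullback.fst tX tY
  set pY := pullback.snd tX tY
  have hpY : D pY :=
    hDMC.stable pY pX tY tX (IsPullback.of_hasPullback tX tY).flip htX
  set g : pullback tX tY ⟶ data.P tY htY :=
    hPT.lift (pX ≫ f) pY (terminal.hom_ext _ _)
  set h : Mf ⟶ pullback tX tY :=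
    pullback.lift mfst (msnd ≫ ε ≫ π₁) (terminal.hom_ext _ _)
  have e1 : h ≫ pX = mfst := pullback.lift_fst _ _ _
  have e2 : h ≫ pY = msnd ≫ ε ≫ π₁ := pullback.lift_snd _ _ _
  have e3 : g ≫ π₁ = pY := hPT.lift_snd _ _ _
  have e4 : g ≫ π₀ = pX ≫ f := hPT.lift_fst _ _ _
  have hcomm : h ≫ g = msnd ≫ ε := by
    apply hPT.hom_ext
    · show (h ≫ g) ≫ π₀ = (msnd ≫ ε) ≫ π₀
      rw [Category.assoc, e4, ← Category.assoc, e1, pullback.condition, Category.assoc]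
    · show (h ≫ g) ≫ π₁ = (msnd ≫ ε) ≫ π₁
      rw [Category.assoc, e3, e2, Category.assoc]
  have hPB : IsPullback h msnd g ε := by
    apply IsPullback.of_isLimit' ⟨hcomm⟩
    apply PullbackCone.IsLimit.mk
    case lift =>
      intro c
      exact pullback.lift (c.fst ≫ pX) c.snd
        (by rw [Category.assoc, ← e4, ← Category.assoc, c.condition, Category.assoc])
    case fac_left =>
      intro c
      apply pullback.hom_ext
      · show (_ ≫ h) ≫ pX = c.fst ≫ pX
        rw [Category.assoc, e1, pullback.lift_fst]
      · show (_ ≫ h) ≫ pY = c.fst ≫ pY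
        rw [Category.assoc, e2, ← Category.assoc, pullback.lift_snd, ← e3]
        conv_rhs => rw [← Category.assoc, c.condition, Category.assoc]
    case fac_right =>
      intro c
      exact pullback.lift_snd _ _ _
    case uniq =>
      intro c m hm1 hm2
      apply pullback.hom_ext
      · show m ≫ mfst = _ ≫ mfst
        rw [pullback.lift_fst, ← hm1, Category.assoc, e1]
      · show m ≫ msnd = _ ≫ msnd
        rw [pullback.lift_snd, ← hm2]
  have hDh : D h := hDMC.stable h msnd g ε hPB (data.ε_mem tY htY)
  refine ⟨Mf, lX, h ≫ pY, hlX, hSigma h pY hDh hpY, ?_⟩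
  rw [e2, ← Category.assoc, pullback.lift_snd, Category.assoc, hrε₁, Category.comp_id]

end Aux2
section Aux3

variable {D : MorphismProperty C}

/-- Canonical retract presentation of a `Bar D` map, together with a splitting
of the induced idempotent on the identity type of the display part. -/
structure Prep (D : MorphismProperty C) (data : FunctorialIdData D) {X Y : C} (f : X ⟶ Y) where
  Z : C
  l : X ⟶ Z
  e : Z ⟶ Y
  s : Z ⟶ X
  hl : Llp D l
  he : D e
  fac : l ≫ e = f
  ls : l ≫ s = 𝟙 X
  se : s ≫ f = e
  W : C
  ii : W ⟶ data.I e he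
  rr : data.I e he ⟶ W
  hir : ii ≫ rr = 𝟙 W
  hri : rr ≫ ii = data.map e e he he (s ≫ l) (by rw [Category.assoc, fac, se])

lemma retract_exists (hDMC : IsDisplayMapCategory D) (hSigma : ModelsSigma D)
    (data : FunctorialIdData D) {X Y : C} (f : X ⟶ Y) (hf : Bar D f) :
    ∃ (Z : C) (l : X ⟶ Z) (e : Z ⟶ Y) (s : Z ⟶ X),
      Llp D l ∧ D e ∧ l ≫ e = f ∧ l ≫ s = 𝟙 X ∧ s ≫ f = e := by
  obtain ⟨Z, l, e, hl, he, fac⟩ := fact_exists hDMC hSigma data f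
  haveI := hf l hl
  have sq : CommSq (𝟙 X) l f e := ⟨by rw [Category.id_comp, fac]⟩
  exact ⟨Z, l, e, sq.lift, hl, he, fac, sq.fac_left, sq.fac_right⟩

lemma prep_exists (hC : IsIdempotentComplete C) (hDMC : IsDisplayMapCategory D)
    (hSigma : ModelsSigma D) (data : FunctorialIdData D) {X Y : C} (f : X ⟶ Y)
    (hf : Bar D f) : Nonempty (Prep D data f) := by
  obtain ⟨Z, l, e, s, hl, he, fac, ls, se⟩ := retract_exists hDMC hSigma data f hf
  have hsle : (s ≫ l) ≫ e = e := by rw [Category.assoc, fac, se]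
  set j := data.map e e he he (s ≫ l) hsle with hj
  have hjj : j ≫ j = j := by
    rw [hj, ← data.map_comp e e e he he he (s ≫ l) hsle (s ≫ l) hsle]
    apply map_congr
    rw [Category.assoc, ← Category.assoc l s l, ls, Category.id_comp]
  obtain ⟨W, ii, rr, hir, hri⟩ := hC.idempotents_split _ j hjj
  exact ⟨⟨Z, l, e, s, hl, he, fac, ls, se, W, ii, rr, hir, hri⟩⟩

lemma bar_hasPullback (hC : IsIdempotentComplete C) (hDMC : IsDisplayMapCategory D)
    (hSigma : ModelsSigma D) (data : FunctorialIdData D) {X Y A : C} (d : X ⟶ Y)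
    (hd : Bar D d) (α : A ⟶ Y) : HasPullback α d := by
  obtain ⟨Z, l, e, s, hl, he, fac, ls, se⟩ := retract_exists hDMC hSigma data d hd
  haveI : HasPullback α e := hDMC.hasPullback e α he
  set P := pullback α e
  set pa := pullback.fst α e
  set pz := pullback.snd α e
  have hjw : pa ≫ α = (pz ≫ s ≫ l) ≫ e := by
    rw [Category.assoc, Category.assoc, fac, se, ← pullback.condition]
  set jP : P ⟶ P := pullback.lift pa (pz ≫ s ≫ l) hjw with hjPdef
  have hjP1 : jP ≫ pa = pa := pullback.lift_fst _ _ _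
  have hjP2 : jP ≫ pz = pz ≫ s ≫ l := pullback.lift_snd _ _ _
  have A4 : ∀ {T : C} (w : X ⟶ T), l ≫ s ≫ w = w := fun w => by
    rw [← Category.assoc, ls, Category.id_comp]
  have A2 : ∀ {T : C} (w : Z ⟶ T), jP ≫ pz ≫ w = pz ≫ s ≫ l ≫ w := fun w => by
    rw [← Category.assoc, hjP2]; simp only [Category.assoc]
  have hjj : jP ≫ jP = jP := by
    apply pullback.hom_ext
    · rw [Category.assoc, hjP1, hjP1]
    · rw [Category.assoc, hjP2, A2, A4]
  obtain ⟨W, ii, rr, hir, hri⟩ := hC.idempotents_split _ jP hjj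
  have A3 : ∀ {T : C} (w : P ⟶ T), rr ≫ ii ≫ w = jP ≫ w := fun w => by
    rw [← Category.assoc, hri]
  have hii_j : ii ≫ jP = ii := by rw [← hri, ← Category.assoc, hir, Category.id_comp]
  have hw : (ii ≫ pa) ≫ α = (ii ≫ pz ≫ s) ≫ d := by
    conv_rhs => rw [Category.assoc, Category.assoc, se]
    rw [Category.assoc, pullback.condition]
  refine HasLimit.mk ⟨PullbackCone.mk (ii ≫ pa) (ii ≫ pz ≫ s) hw, ?_⟩
  apply PullbackCone.IsLimit.mk
  case lift =>
    intro c
    exact pullback.lift c.fst (c.snd ≫ l) (by rw [Category.assoc, fac, c.condition]) ≫ rr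
  case fac_left =>
    intro c
    set t := pullback.lift c.fst (c.snd ≫ l) (by rw [Category.assoc, fac, c.condition]) with ht
    show (t ≫ rr) ≫ ii ≫ pa = c.fst
    rw [Category.assoc, A3, hjP1, pullback.lift_fst]
  case fac_right =>
    intro c
    set t := pullback.lift c.fst (c.snd ≫ l) (by rw [Category.assoc, fac, c.condition]) with ht
    have A5 : ∀ {T : C} (w : Z ⟶ T), t ≫ pz ≫ w = c.snd ≫ l ≫ w := fun w => by
      rw [← Category.assoc, pullback.lift_snd]; simp only [Category.assoc]
    show (t ≫ rr) ≫ ii ≫ pz ≫ s = c.snd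
    rw [Category.assoc, A3, A2, A5, A4, ls, Category.comp_id]
  case uniq =>
    intro c m hm1 hm2
    set t := pullback.lift c.fst (c.snd ≫ l) (by rw [Category.assoc, fac, c.condition]) with ht
    have hmi : m ≫ ii = t := by
      apply pullback.hom_ext
      · show (m ≫ ii) ≫ pa = t ≫ pa
        rw [Category.assoc, hm1, pullback.lift_fst]
      · show (m ≫ ii) ≫ pz = t ≫ pz
        rw [Category.assoc, ← hii_j, Category.assoc, hjP2, pullback.lift_snd]
        conv_lhs => rw [← Category.assoc, ← Category.assoc, ← Category.assoc]
        have hm2' : ((m ≫ ii) ≫ pz) ≫ s = c.snd := by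
          simpa only [Category.assoc] using hm2
        rw [hm2']
    show m = t ≫ rr
    rw [← hmi, Category.assoc, hir, Category.comp_id]

end Aux3
section Aux4

variable {D : MorphismProperty C}

lemma llp_section (hDMC : IsDisplayMapCategory D)
    {A X Z E W : C} (α : A ⟶ X) (l : X ⟶ Z) (s : Z ⟶ X) (ls : l ≫ s = 𝟙 X)
    (ρ : Z ⟶ E) (εp : E ⟶ Z) (j : E ⟶ E) (ii : W ⟶ E) (rr : E ⟶ W)
    (hir : ii ≫ rr = 𝟙 W) (hri : rr ≫ ii = j)
    (hρεp : ρ ≫ εp = 𝟙 Z) (hjεp : j ≫ εp = εp ≫ s ≫ l) (hρj : ρ ≫ j = (s ≫ l) ≫ ρ)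
    (hεpD : D εp)
    (hlp : ∀ ⦃Q' : C⦄ (p' : Q' ⟶ A) (q' : Q' ⟶ E), IsPullback p' q' (α ≫ l) εp →
      ∀ (m : A ⟶ Q'), m ≫ p' = 𝟙 A → m ≫ q' = (α ≫ l) ≫ ρ → Llp D m)
    {Q : C} (p : Q ⟶ A) (q : Q ⟶ W) (hpq : IsPullback p q α (ii ≫ εp ≫ s))
    (l' : A ⟶ Q) (h1 : l' ≫ p = 𝟙 A) (h2 : l' ≫ q = α ≫ l ≫ ρ ≫ rr) :
    Llp D l' := by
  haveI : HasPullback (α ≫ l) εp := hDMC.hasPullback εp (α ≫ l) hεpD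
  set fst' := pullback.fst (α ≫ l) εp
  set snd' := pullback.snd (α ≫ l) εp
  have hii_j : ii ≫ j = ii := by rw [← hri, ← Category.assoc, hir, Category.id_comp]
  have hiεsl : ii ≫ εp ≫ s ≫ l = ii ≫ εp := by
    conv_rhs => rw [← hii_j, Category.assoc, hjεp]
  have hαls : α ≫ l ≫ s = α := by rw [ls, Category.comp_id]
  have A3 : ∀ {T : C} (w : E ⟶ T), rr ≫ ii ≫ w = j ≫ w := fun w => by
    rw [← Category.assoc, hri]
  have hjεp_r : ∀ {T : C} (w : Z ⟶ T), j ≫ εp ≫ w = εp ≫ s ≫ l ≫ w := fun w => by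
    rw [← Category.assoc, hjεp]; simp only [Category.assoc]
  set l'' : A ⟶ pullback (α ≫ l) εp := pullback.lift (𝟙 A) (α ≫ l ≫ ρ)
    (by rw [Category.id_comp, Category.assoc, Category.assoc, hρεp, Category.comp_id]) with hl''
  have hllp : Llp D l'' := hlp fst' snd' (IsPullback.of_hasPullback _ _) l''
    (pullback.lift_fst _ _ _) (by rw [pullback.lift_snd]; simp only [Category.assoc])
  have huw : p ≫ α ≫ l = (q ≫ ii) ≫ εp := by
    rw [← Category.assoc, hpq.w]
    simp only [Category.assoc]
    rw [hiεsl]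
  set u : Q ⟶ pullback (α ≫ l) εp := pullback.lift p (q ≫ ii) huw with hu
  have hαls_r : ∀ {T : C} (w : X ⟶ T), α ≫ l ≫ s ≫ w = α ≫ w := fun w => by
    rw [show l ≫ s ≫ w = w from by rw [← Category.assoc, ls, Category.id_comp]]
  have hvw : fst' ≫ α = (snd' ≫ rr) ≫ ii ≫ εp ≫ s := by
    rw [show fst' ≫ α = (fst' ≫ α ≫ l) ≫ s from by
        simp only [Category.assoc]; rw [ls, Category.comp_id],
      show fst' ≫ α ≫ l = snd' ≫ εp from pullback.condition]
    simp only [Category.assoc]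
    rw [A3, hjεp_r, ls, Category.comp_id]
  set v : pullback (α ≫ l) εp ⟶ Q := hpq.lift fst' (snd' ≫ rr) hvw with hv
  have huv : u ≫ v = 𝟙 Q := by
    apply hpq.hom_ext
    · rw [Category.assoc, hpq.lift_fst, pullback.lift_fst, Category.id_comp]
    · rw [Category.assoc, hpq.lift_snd, ← Category.assoc, pullback.lift_snd,
        Category.assoc, hir, Category.comp_id, Category.id_comp]
  have ru : l' ≫ u = l'' := by
    apply pullback.hom_ext
    · rw [Category.assoc, pullback.lift_fst, pullback.lift_fst, h1]
    · rw [Category.assoc, pullback.lift_snd, pullback.lift_snd, ← Category.assoc, h2]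
      simp only [Category.assoc]
      rw [hri, hρj]
      simp only [Category.assoc]
      rw [hαls_r]
  have rv : l'' ≫ v = l' := by
    apply hpq.hom_ext
    · rw [Category.assoc, hpq.lift_fst, pullback.lift_fst, h1]
    · rw [Category.assoc, hpq.lift_snd, ← Category.assoc, pullback.lift_snd, h2]
      simp only [Category.assoc]
  exact llp_of_retract ⟨𝟙 A, u, 𝟙 A, v, by rw [Category.id_comp, ru],
    by rw [Category.id_comp, rv], Category.id_comp _, huv⟩ hllp

end Aux4
namespace Prep

variable {D : MorphismProperty C} {data : FunctorialIdData D} {X Y : C} {f : X ⟶ Y}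

lemma sle (pp : Prep D data f) : (pp.s ≫ pp.l) ≫ pp.e = pp.e := by
  rw [Category.assoc, pp.fac, pp.se]

/-- The idempotent on the identity type of the display part. -/
noncomputable def j (pp : Prep D data f) : data.I pp.e pp.he ⟶ data.I pp.e pp.he :=
  data.map pp.e pp.e pp.he pp.he (pp.s ≫ pp.l) pp.sle

lemma hri' (pp : Prep D data f) : pp.rr ≫ pp.ii = pp.j := pp.hri

lemma ii_j (pp : Prep D data f) : pp.ii ≫ pp.j = pp.ii := by
  rw [← pp.hri', ← Category.assoc, pp.hir, Category.id_comp]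

lemma r_j (pp : Prep D data f) :
    data.r pp.e pp.he ≫ pp.j = (pp.s ≫ pp.l) ≫ data.r pp.e pp.he :=
  data.map_r pp.e pp.e pp.he pp.he (pp.s ≫ pp.l) pp.sle

lemma j_επ₀ (pp : Prep D data f) :
    pp.j ≫ data.ε pp.e pp.he ≫ data.π₀ pp.e pp.he
      = data.ε pp.e pp.he ≫ data.π₀ pp.e pp.he ≫ pp.s ≫ pp.l := by
  rw [← Category.assoc]
  simp only [j]
  rw [data.map_ε, Category.assoc, (data.isPullback pp.e pp.he).lift_fst]

lemma j_επ₁ (pp : Prep D data f) :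
    pp.j ≫ data.ε pp.e pp.he ≫ data.π₁ pp.e pp.he
      = data.ε pp.e pp.he ≫ data.π₁ pp.e pp.he ≫ pp.s ≫ pp.l := by
  rw [← Category.assoc]
  simp only [j]
  rw [data.map_ε, Category.assoc, (data.isPullback pp.e pp.he).lift_snd]

lemma r_επ₀ (pp : Prep D data f) :
    data.r pp.e pp.he ≫ data.ε pp.e pp.he ≫ data.π₀ pp.e pp.he = 𝟙 pp.Z := by
  rw [← Category.assoc, data.fact, (data.isPullback pp.e pp.he).lift_fst]

lemma r_επ₁ (pp : Prep D data f) :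
    data.r pp.e pp.he ≫ data.ε pp.e pp.he ≫ data.π₁ pp.e pp.he = 𝟙 pp.Z := by
  rw [← Category.assoc, data.fact, (data.isPullback pp.e pp.he).lift_snd]

end Prep
section BarData

variable {D : MorphismProperty C} (data : FunctorialIdData D)

/-- Comparison `P e → X ×_Y X`. -/
noncomputable def sigmaHom {X Y : C} {f : X ⟶ Y} (pp : Prep D data f) [HasPullback f f] :
    data.P pp.e pp.he ⟶ pullback f f :=
  pullback.lift (data.π₀ pp.e pp.he ≫ pp.s) (data.π₁ pp.e pp.he ≫ pp.s)
    (by rw [Category.assoc, Category.assoc, pp.se]; exact (data.isPullback pp.e pp.he).w)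

/-- The `ε` of the identity data for `Bar D`. -/
noncomputable def epsBar {X Y : C} {f : X ⟶ Y} (pp : Prep D data f) [HasPullback f f] :
    pp.W ⟶ pullback f f :=
  pp.ii ≫ data.ε pp.e pp.he ≫ sigmaHom data pp

/-- The `r` of the identity data for `Bar D`. -/
noncomputable def rBar {X Y : C} {f : X ⟶ Y} (pp : Prep D data f) : X ⟶ pp.W :=
  pp.l ≫ data.r pp.e pp.he ≫ pp.rr

lemma epsBar_fst {X Y : C} {f : X ⟶ Y} (pp : Prep D data f) [HasPullback f f] :
    epsBar data pp ≫ pullback.fst f f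
      = pp.ii ≫ (data.ε pp.e pp.he ≫ data.π₀ pp.e pp.he) ≫ pp.s := by
  simp only [epsBar, sigmaHom, Category.assoc, pullback.lift_fst]

lemma epsBar_snd {X Y : C} {f : X ⟶ Y} (pp : Prep D data f) [HasPullback f f] :
    epsBar data pp ≫ pullback.snd f f
      = pp.ii ≫ (data.ε pp.e pp.he ≫ data.π₁ pp.e pp.he) ≫ pp.s := by
  simp only [epsBar, sigmaHom, Category.assoc, pullback.lift_snd]

lemma fact_bar {X Y : C} {f : X ⟶ Y} (pp : Prep D data f) [HasPullback f f] :
    rBar data pp ≫ epsBar data pp = (IsPullback.of_hasPullback f f).lift (𝟙 X) (𝟙 X) rfl := by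
  apply pullback.hom_ext
  · rw [Category.assoc, (IsPullback.of_hasPullback f f).lift_fst]
    rw [show epsBar data pp ≫ pullback.fst f f
        = pp.ii ≫ data.ε pp.e pp.he ≫ data.π₀ pp.e pp.he ≫ pp.s from by
      rw [epsBar_fst]; simp only [Category.assoc]]
    simp only [rBar, Category.assoc]
    rw [reassoc_of% pp.hri', reassoc_of% pp.r_j, reassoc_of% pp.ls,
      reassoc_of% pp.r_επ₀, pp.ls]
  · rw [Category.assoc, (IsPullback.of_hasPullback f f).lift_snd]
    rw [show epsBar data pp ≫ pullback.snd f f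
        = pp.ii ≫ data.ε pp.e pp.he ≫ data.π₁ pp.e pp.he ≫ pp.s from by
      rw [epsBar_snd]; simp only [Category.assoc]]
    simp only [rBar, Category.assoc]
    rw [reassoc_of% pp.hri', reassoc_of% pp.r_j, reassoc_of% pp.ls,
      reassoc_of% pp.r_επ₁, pp.ls]

lemma ii_επ₀_sl {X Y : C} {f : X ⟶ Y} (pp : Prep D data f) :
    pp.ii ≫ data.ε pp.e pp.he ≫ data.π₀ pp.e pp.he ≫ pp.s ≫ pp.l
      = pp.ii ≫ data.ε pp.e pp.he ≫ data.π₀ pp.e pp.he := by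
  conv_lhs => rw [← pp.j_επ₀]
  rw [reassoc_of% pp.ii_j]

lemma ii_επ₁_sl {X Y : C} {f : X ⟶ Y} (pp : Prep D data f) :
    pp.ii ≫ data.ε pp.e pp.he ≫ data.π₁ pp.e pp.he ≫ pp.s ≫ pp.l
      = pp.ii ≫ data.ε pp.e pp.he ≫ data.π₁ pp.e pp.he := by
  conv_lhs => rw [← pp.j_επ₁]
  rw [reassoc_of% pp.ii_j]

lemma epsBar_mem {X Y : C} {f : X ⟶ Y} (pp : Prep D data f) [HasPullback f f] :
    Bar D (epsBar data pp) := by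
  set lam : pullback f f ⟶ data.P pp.e pp.he :=
    (data.isPullback pp.e pp.he).lift (pullback.fst f f ≫ pp.l) (pullback.snd f f ≫ pp.l)
      (by rw [Category.assoc, Category.assoc, pp.fac]; exact pullback.condition) with hlam
  have sq1 : pp.ii ≫ data.ε pp.e pp.he = epsBar data pp ≫ lam := by
    apply (data.isPullback pp.e pp.he).hom_ext
    · rw [Category.assoc, Category.assoc, (data.isPullback pp.e pp.he).lift_fst,
        ← Category.assoc, ← Category.assoc]
      rw [show (epsBar data pp ≫ pullback.fst f f)
          = pp.ii ≫ data.ε pp.e pp.he ≫ data.π₀ pp.e pp.he ≫ pp.s from by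
        rw [epsBar_fst]; simp only [Category.assoc]]
      simp only [Category.assoc]
      rw [ii_επ₀_sl]
    · rw [Category.assoc, Category.assoc, (data.isPullback pp.e pp.he).lift_snd,
        ← Category.assoc, ← Category.assoc]
      rw [show (epsBar data pp ≫ pullback.snd f f)
          = pp.ii ≫ data.ε pp.e pp.he ≫ data.π₁ pp.e pp.he ≫ pp.s from by
        rw [epsBar_snd]; simp only [Category.assoc]]
      simp only [Category.assoc]
      rw [ii_επ₁_sl]
  have sq2 : pp.rr ≫ epsBar data pp = data.ε pp.e pp.he ≫ sigmaHom data pp := by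
    simp only [epsBar]
    rw [reassoc_of% pp.hri']
    apply pullback.hom_ext
    · simp only [sigmaHom, Category.assoc, pullback.lift_fst]
      rw [← Category.assoc, ← Category.assoc, ← Category.assoc]
      rw [show (pp.j ≫ data.ε pp.e pp.he) ≫ data.π₀ pp.e pp.he
          = data.ε pp.e pp.he ≫ data.π₀ pp.e pp.he ≫ pp.s ≫ pp.l from by
        rw [Category.assoc]; exact pp.j_επ₀]
      simp only [Category.assoc, pp.ls, Category.comp_id]
    · simp only [sigmaHom, Category.assoc, pullback.lift_snd]
      rw [← Category.assoc, ← Category.assoc, ← Category.assoc]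
      rw [show (pp.j ≫ data.ε pp.e pp.he) ≫ data.π₁ pp.e pp.he
          = data.ε pp.e pp.he ≫ data.π₁ pp.e pp.he ≫ pp.s ≫ pp.l from by
        rw [Category.assoc]; exact pp.j_επ₁]
      simp only [Category.assoc, pp.ls, Category.comp_id]
  have lamσ : lam ≫ sigmaHom data pp = 𝟙 (pullback f f) := by
    apply pullback.hom_ext
    · simp only [sigmaHom, Category.assoc, pullback.lift_fst, Category.id_comp]
      rw [reassoc_of% (data.isPullback pp.e pp.he).lift_fst (pullback.fst f f ≫ pp.l)]
      simp only [Category.assoc, pp.ls, Category.comp_id]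
    · simp only [sigmaHom, Category.assoc, pullback.lift_snd, Category.id_comp]
      rw [reassoc_of% (data.isPullback pp.e pp.he).lift_snd (pullback.fst f f ≫ pp.l)]
      simp only [Category.assoc, pp.ls, Category.comp_id]
  exact bar_of_retract ⟨pp.ii, lam, pp.rr, sigmaHom data pp, sq1, sq2, pp.hir, lamσ⟩
    (mem_bar_of_mem (data.ε_mem pp.e pp.he))

lemma lp_bar (hDMC : IsDisplayMapCategory D) (hSigma : ModelsSigma D)
    {X Y : C} {f : X ⟶ Y} (pp : Prep D data f) [HasPullback f f]
    (π : pullback f f ⟶ X) (hπ : π = pullback.fst f f ∨ π = pullback.snd f f)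
    {A : C} (α : A ⟶ X) {Q : C} (p : Q ⟶ A) (q : Q ⟶ pp.W)
    (hpb : IsPullback p q α (epsBar data pp ≫ π))
    (l' : A ⟶ Q) (h1 : l' ≫ p = 𝟙 A) (h2 : l' ≫ q = α ≫ rBar data pp) :
    Llp D l' := by
  have hπ₀ : D (data.π₀ pp.e pp.he) :=
    hDMC.stable _ _ _ _ (data.isPullback pp.e pp.he) pp.he
  have hπ₁ : D (data.π₁ pp.e pp.he) :=
    hDMC.stable _ _ _ _ (data.isPullback pp.e pp.he).flip pp.he
  simp only [rBar] at h2
  rcases hπ with hπ | hπ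
  · subst hπ
    rw [epsBar_fst] at hpb
    exact llp_section hDMC α pp.l pp.s pp.ls (data.r pp.e pp.he)
      (data.ε pp.e pp.he ≫ data.π₀ pp.e pp.he) pp.j pp.ii pp.rr pp.hir pp.hri'
      pp.r_επ₀ (by simpa only [Category.assoc] using pp.j_επ₀) pp.r_j
      (hSigma _ _ (data.ε_mem pp.e pp.he) hπ₀)
      (fun Q' p' q' hpb' m hm1 hm2 =>
        data.lp pp.e pp.he (data.π₀ pp.e pp.he) (Or.inl rfl) (α ≫ pp.l) p' q' hpb' m hm1 hm2)
      p q hpb l' h1 h2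
  · subst hπ
    rw [epsBar_snd] at hpb
    exact llp_section hDMC α pp.l pp.s pp.ls (data.r pp.e pp.he)
      (data.ε pp.e pp.he ≫ data.π₁ pp.e pp.he) pp.j pp.ii pp.rr pp.hir pp.hri'
      pp.r_επ₁ (by simpa only [Category.assoc] using pp.j_επ₁) pp.r_j
      (hSigma _ _ (data.ε_mem pp.e pp.he) hπ₁)
      (fun Q' p' q' hpb' m hm1 hm2 =>
        data.lp pp.e pp.he (data.π₁ pp.e pp.he) (Or.inr rfl) (α ≫ pp.l) p' q' hpb' m hm1 hm2)
      p q hpb l' h1 h2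

lemma mapBar_cond {Y X X' : C} {f : X ⟶ Y} {f' : X' ⟶ Y}
    (pp : Prep D data f) (pp' : Prep D data f') (u : X ⟶ X') (hu : u ≫ f' = f) :
    (pp.s ≫ u ≫ pp'.l) ≫ pp'.e = pp.e := by
  rw [Category.assoc, Category.assoc, pp'.fac, hu, pp.se]

/-- The functorial action for `Bar D`. -/
noncomputable def mapBar {Y X X' : C} {f : X ⟶ Y} {f' : X' ⟶ Y}
    (pp : Prep D data f) (pp' : Prep D data f') (u : X ⟶ X') (hu : u ≫ f' = f) :
    pp.W ⟶ pp'.W :=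
  pp.ii ≫ data.map pp.e pp'.e pp.he pp'.he (pp.s ≫ u ≫ pp'.l)
    (mapBar_cond data pp pp' u hu) ≫ pp'.rr

lemma map_j {Y X X' : C} {f : X ⟶ Y} {f' : X' ⟶ Y}
    (pp : Prep D data f) (pp' : Prep D data f') (u : X ⟶ X') (hu : u ≫ f' = f) :
    data.map pp.e pp'.e pp.he pp'.he (pp.s ≫ u ≫ pp'.l) (mapBar_cond data pp pp' u hu) ≫ pp'.j
      = data.map pp.e pp'.e pp.he pp'.he (pp.s ≫ u ≫ pp'.l) (mapBar_cond data pp pp' u hu) := by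
  simp only [Prep.j]
  rw [← data.map_comp pp.e pp'.e pp'.e pp.he pp'.he pp'.he _ (mapBar_cond data pp pp' u hu)
    _ pp'.sle]
  apply map_congr
  simp only [Category.assoc]
  rw [reassoc_of% pp'.ls]

lemma j_map {Y X X' : C} {f : X ⟶ Y} {f' : X' ⟶ Y}
    (pp : Prep D data f) (pp' : Prep D data f') (u : X ⟶ X') (hu : u ≫ f' = f) :
    pp.j ≫ data.map pp.e pp'.e pp.he pp'.he (pp.s ≫ u ≫ pp'.l) (mapBar_cond data pp pp' u hu)
      = data.map pp.e pp'.e pp.he pp'.he (pp.s ≫ u ≫ pp'.l) (mapBar_cond data pp pp' u hu) := by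
  simp only [Prep.j]
  rw [← data.map_comp pp.e pp.e pp'.e pp.he pp.he pp'.he _ pp.sle
    _ (mapBar_cond data pp pp' u hu)]
  apply map_congr
  simp only [Category.assoc]
  rw [reassoc_of% pp.ls]

lemma mapBar_r {Y X X' : C} {f : X ⟶ Y} {f' : X' ⟶ Y}
    (pp : Prep D data f) (pp' : Prep D data f') (u : X ⟶ X') (hu : u ≫ f' = f) :
    rBar data pp ≫ mapBar data pp pp' u hu = u ≫ rBar data pp' := by
  simp only [rBar, mapBar, Category.assoc]
  rw [reassoc_of% pp.hri', reassoc_of% pp.r_j, reassoc_of% pp.ls,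
    reassoc_of% (data.map_r pp.e pp'.e pp.he pp'.he (pp.s ≫ u ≫ pp'.l)
      (mapBar_cond data pp pp' u hu))]
  rw [reassoc_of% pp.ls]

lemma mapBar_id {X Y : C} {f : X ⟶ Y} (pp : Prep D data f) :
    mapBar data pp pp (𝟙 X) (Category.id_comp f) = 𝟙 pp.W := by
  simp only [mapBar]
  rw [map_congr data pp.e pp.e pp.he pp.he
    (show pp.s ≫ 𝟙 X ≫ pp.l = pp.s ≫ pp.l from by rw [Category.id_comp])]
  rw [show data.map pp.e pp.e pp.he pp.he (pp.s ≫ pp.l) _ = pp.j from rfl]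
  rw [reassoc_of% pp.ii_j, pp.hir]

lemma mapBar_comp {Y X X' X'' : C} {f : X ⟶ Y} {f' : X' ⟶ Y} {f'' : X'' ⟶ Y}
    (pp : Prep D data f) (pp' : Prep D data f') (pp'' : Prep D data f'')
    (u : X ⟶ X') (hu : u ≫ f' = f) (v : X' ⟶ X'') (hv : v ≫ f'' = f') :
    mapBar data pp pp'' (u ≫ v) (by rw [Category.assoc, hv, hu])
      = mapBar data pp pp' u hu ≫ mapBar data pp' pp'' v hv := by
  simp only [mapBar, Category.assoc]
  rw [reassoc_of% pp'.hri', reassoc_of% (j_map data pp' pp'' v hv),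
    ← Category.assoc (data.map pp.e pp'.e pp.he pp'.he _ _),
    ← data.map_comp pp.e pp'.e pp''.e pp.he pp'.he pp''.he _ (mapBar_cond data pp pp' u hu)
      _ (mapBar_cond data pp' pp'' v hv)]
  congr 1
  congr 1
  apply map_congr
  simp only [Category.assoc]
  rw [reassoc_of% pp'.ls]

end BarData
section Final

variable {D : MorphismProperty C} (data : FunctorialIdData D)

lemma mapBar_ε {Y X X' : C} {f : X ⟶ Y} {f' : X' ⟶ Y}
    (pp : Prep D data f) (pp' : Prep D data f') (u : X ⟶ X') (hu : u ≫ f' = f)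
    [HasPullback f f] [HasPullback f' f']
    (w : (pullback.fst f f ≫ u) ≫ f' = (pullback.snd f f ≫ u) ≫ f') :
    mapBar data pp pp' u hu ≫ epsBar data pp'
      = epsBar data pp ≫ (IsPullback.of_hasPullback f' f').lift
          (pullback.fst f f ≫ u) (pullback.snd f f ≫ u) w := by
  apply pullback.hom_ext
  · rw [Category.assoc, Category.assoc, (IsPullback.of_hasPullback f' f').lift_fst,
      ← Category.assoc, ← Category.assoc, epsBar_fst]
    rw [show (mapBar data pp pp' u hu ≫ epsBar data pp') ≫ pullback.fst f' f'
        = mapBar data pp pp' u hu ≫ pp'.ii ≫ (data.ε pp'.e pp'.he ≫ data.π₀ pp'.e pp'.he) ≫ pp'.s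
        from by rw [Category.assoc, epsBar_fst]]
    simp only [mapBar, Category.assoc]
    rw [reassoc_of% pp'.hri', reassoc_of% (map_j data pp pp' u hu),
      reassoc_of% (data.map_ε pp.e pp'.e pp.he pp'.he (pp.s ≫ u ≫ pp'.l)
        (mapBar_cond data pp pp' u hu)),
      reassoc_of% ((data.isPullback pp'.e pp'.he).lift_fst
        (data.π₀ pp.e pp.he ≫ (pp.s ≫ u ≫ pp'.l)) (data.π₁ pp.e pp.he ≫ (pp.s ≫ u ≫ pp'.l)))]
    rw [pp'.ls, Category.comp_id]

  · rw [Category.assoc, Category.assoc, (IsPullback.of_hasPullback f' f').lift_snd,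
      ← Category.assoc, ← Category.assoc, epsBar_snd]
    rw [show (mapBar data pp pp' u hu ≫ epsBar data pp') ≫ pullback.snd f' f'
        = mapBar data pp pp' u hu ≫ pp'.ii ≫ (data.ε pp'.e pp'.he ≫ data.π₁ pp'.e pp'.he) ≫ pp'.s
        from by rw [Category.assoc, epsBar_snd]]
    simp only [mapBar, Category.assoc]
    rw [reassoc_of% pp'.hri', reassoc_of% (map_j data pp pp' u hu),
      reassoc_of% (data.map_ε pp.e pp'.e pp.he pp'.he (pp.s ≫ u ≫ pp'.l)
        (mapBar_cond data pp pp' u hu)),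
      reassoc_of% ((data.isPullback pp'.e pp'.he).lift_snd
        (data.π₀ pp.e pp.he ≫ (pp.s ≫ u ≫ pp'.l)) (data.π₁ pp.e pp.he ≫ (pp.s ≫ u ≫ pp'.l)))]
    rw [pp'.ls, Category.comp_id]

/-- The functorial identity-type data for `Bar D`. -/
noncomputable def barIdData (hC : IsIdempotentComplete C) (hDMC : IsDisplayMapCategory D)
    (hSigma : ModelsSigma D) : FunctorialIdData (Bar D) :=
  let pp : ∀ ⦃X Y : C⦄ (f : X ⟶ Y), Bar D f → Prep D data f := fun _ _ f hf =>
    (prep_exists hC hDMC hSigma data f hf).some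
  let pb : ∀ ⦃X Y : C⦄ (f : X ⟶ Y), Bar D f → HasPullback f f := fun _ _ f hf =>
    bar_hasPullback hC hDMC hSigma data f hf f
  { P := fun _ _ f hf => @pullback C _ _ _ _ f f (pb f hf)
    π₀ := fun _ _ f hf => @pullback.fst C _ _ _ _ f f (pb f hf)
    π₁ := fun _ _ f hf => @pullback.snd C _ _ _ _ f f (pb f hf)
    isPullback := fun _ _ f hf => @IsPullback.of_hasPullback C _ _ _ _ f f (pb f hf)
    I := fun _ _ f hf => (pp f hf).W
    r := fun _ _ f hf => rBar data (pp f hf)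
    ε := fun _ _ f hf => @epsBar C _ D data _ _ f (pp f hf) (pb f hf)
    fact := fun _ _ f hf => @fact_bar C _ D data _ _ f (pp f hf) (pb f hf)
    ε_mem := fun _ _ f hf => @epsBar_mem C _ D data _ _ f (pp f hf) (pb f hf)
    lp := fun _ _ f hf π hπ _ α _ p q hpb l' h1 h2 =>
      llp_bar_of_llp
        (@lp_bar C _ D data hDMC hSigma _ _ f (pp f hf) (pb f hf) π hπ _ α _ p q hpb l' h1 h2)
    map := fun _ _ _ f f' hf hf' u hu => mapBar data (pp f hf) (pp f' hf') u hu
    map_r := fun _ _ _ f f' hf hf' u hu => mapBar_r data (pp f hf) (pp f' hf') u hu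
    map_ε := fun _ _ _ f f' hf hf' u hu =>
      @mapBar_ε C _ D data _ _ _ f f' (pp f hf) (pp f' hf') u hu (pb f hf) (pb f' hf')
        (by rw [Category.assoc, Category.assoc, hu]
            exact (@IsPullback.of_hasPullback C _ _ _ _ f f (pb f hf)).w)
    map_id := fun _ _ f hf => mapBar_id data (pp f hf)
    map_comp := fun _ _ _ _ f f' f'' hf hf' hf'' u hu v hv =>
      mapBar_comp data (pp f hf) (pp f' hf') (pp f'' hf'') u hu v hv }

end Final
/-- If `C` is Cauchy complete and `(C, D)` is a display map category
modeling `Σ`-types and functorial `Id`-types, then so is `(C, D̄)`. -/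
theorem statement_0 (hC : IsIdempotentComplete C) (D : MorphismProperty C)
    (hDMC : IsDisplayMapCategory D) (hSigma : ModelsSigma D)
    (hId : ModelsFunctorialId D) :
    IsDisplayMapCategory (Bar D) ∧ ModelsSigma (Bar D) ∧ ModelsFunctorialId (Bar D) := by
  obtain ⟨data⟩ := hId
  refine ⟨⟨hDMC.hasTerminal, ?_, ?_, ?_, ?_⟩, ?_, ⟨barIdData data hC hDMC hSigma⟩⟩
  · intro X Y f hf U V g hg
    haveI := hf
    infer_instance
  · intro X Y f hY
    exact mem_bar_of_mem (hDMC.mem_of_isTerminal f hY)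
  · intro X Y A d α hd
    exact bar_hasPullback hC hDMC hSigma data d hd α
  · intro P A X Y h k α d hP hd
    exact bar_stable h k α d hP hd
  · intro X Y Z f g hf hg U V p hp
    haveI := hf p hp
    haveI := hg p hp
    infer_instance

end DMCPaper
end

section
/- Let (C, D) be a display map category which models Σ-types and Id-types. Then (^⧄D, (^⧄D)^⧄) is a weak factorization system on C: every morphism f : X → Y of C factors as f = ρ(f) ∘ λ(f) where λ(f) = (1_X × r_Y ∘ f) : X → X ×_Y Id(Y) lies in ^⧄D and ρ(f) = π_1 ∘ ε_Y : X ×_Y Id(Y) → Y lies in D (here X ×_Y Id(Y) is the pullback of π_0 ∘ ε_Y : Id(Y) → Y along f), and ^⧄D and ((^⧄D)^⧄) determine each other by lifting properties. -/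
open CategoryTheory Limits

universe v u

namespace DMCPaper

variable {C : Type u} [Category.{v} C]

lemma mem_bar {D : MorphismProperty C} {X Y : C} {f : X ⟶ Y} (hf : D f) : Bar D f :=
  fun _ _ l hl => hl f hf

lemma key (D : MorphismProperty C)
    (hDMC : IsDisplayMapCategory D) (hSigma : ModelsSigma D) :
    ∀ ⦃X Y : C⦄ (f : X ⟶ Y) ⦃T : C⦄ (_ : IsTerminal T) (tY : Y ⟶ T)
      ⦃P : C⦄ (π₀ π₁ : P ⟶ Y) (hP : IsPullback π₀ π₁ tY tY)
      ⦃I : C⦄ (r : Y ⟶ I) (ε : I ⟶ P),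
      r ≫ ε = hP.lift (𝟙 Y) (𝟙 Y) rfl → D ε →
      (∀ (π : P ⟶ Y), (π = π₀ ∨ π = π₁) →
        ∀ ⦃A : C⦄ (α : A ⟶ Y) ⦃Q : C⦄ (p : Q ⟶ A) (q : Q ⟶ I),
          IsPullback p q α (ε ≫ π) →
          ∀ (l : A ⟶ Q), l ≫ p = 𝟙 A → l ≫ q = α ≫ r → Llp D l) →
      ∀ ⦃M : C⦄ (p : M ⟶ X) (k : M ⟶ I), IsPullback p k f (ε ≫ π₀) →
      ∀ (lam : X ⟶ M), lam ≫ p = 𝟙 X → lam ≫ k = f ≫ r →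
        Llp D lam ∧ D (k ≫ ε ≫ π₁) ∧ lam ≫ k ≫ ε ≫ π₁ = f := by
  intro X Y f T hT tY P π₀ π₁ hP I r ε hrε hε hlp M p k hPb lam hlam1 hlam2
  refine ⟨hlp π₀ (Or.inl rfl) f p k hPb lam hlam1 hlam2, ?_, ?_⟩
  · -- D (k ≫ ε ≫ π₁)
    have hDtX : D (hT.from X) := hDMC.mem_of_isTerminal _ hT
    haveI := hDMC.hasPullback (hT.from X) tY hDtX
    set tX := hT.from X with htX
    set v : pullback tY tX ⟶ Y := pullback.fst tY tX with hv
    set u : pullback tY tX ⟶ X := pullback.snd tY tX with hu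
    have hW : IsPullback v u tY tX := IsPullback.of_hasPullback _ _
    set w : pullback tY tX ⟶ P := hP.lift (u ≫ f) v (hT.hom_ext _ _) with hwdef
    have hw0 : w ≫ π₀ = u ≫ f := hP.lift_fst _ _ _
    have hw1 : w ≫ π₁ = v := hP.lift_snd _ _ _
    set a : M ⟶ pullback tY tX := hW.lift (k ≫ ε ≫ π₁) p (hT.hom_ext _ _) with hadef
    have hav : a ≫ v = k ≫ ε ≫ π₁ := hW.lift_fst _ _ _
    have hau : a ≫ u = p := hW.lift_snd _ _ _
    have hBot : IsPullback u w f π₀ := by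
      apply IsPullback.of_bot (v₂₁ := π₁) (v₂₂ := tY) (h₃₁ := tY) ?_ ?_ hP
      · rw [hw1, show f ≫ tY = tX from hT.hom_ext _ _]
        exact hW.flip
      · rw [hw0]
    have hTop : IsPullback k a ε w := by
      apply IsPullback.of_bot (v₂₁ := u) (v₂₂ := π₀) (h₃₁ := f) ?_ ?_ hBot.flip
      · rw [hau]
        exact hPb.flip
      · apply hP.hom_ext
        · simp only [Category.assoc, hw0, hw1]
          rw [← Category.assoc a u f, hau]
          exact hPb.w.symm
        · simp only [Category.assoc, hw1]
          exact hav.symm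
    have hDa : D a := hDMC.stable a k w ε hTop.flip hε
    have hDv : D v := hDMC.stable v u tY tX hW hDtX
    rw [← hav]
    exact hSigma a v hDa hDv
  · rw [show lam ≫ k ≫ ε ≫ π₁ = (lam ≫ k) ≫ ε ≫ π₁ by simp, hlam2,
      show (f ≫ r) ≫ ε ≫ π₁ = f ≫ (r ≫ ε) ≫ π₁ by simp, hrε, hP.lift_snd,
      Category.comp_id]

/-- a display map category with `Σ`- and `Id`-types yields a weak
factorization system `(^⧄D, (^⧄D)^⧄)`, with the explicit factorization
`f = ρ(f) ∘ λ(f)` through `X ×_Y Id(Y)`, `λ(f) ∈ ^⧄D` and `ρ(f) ∈ D`. -/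
theorem statement_2 (D : MorphismProperty C)
    (hDMC : IsDisplayMapCategory D) (hSigma : ModelsSigma D) (hId : ModelsId D) :
    IsWFS (Llp D) (Bar D) ∧
    ∀ ⦃X Y : C⦄ (f : X ⟶ Y) ⦃T : C⦄ (_ : IsTerminal T) (tY : Y ⟶ T)
      ⦃P : C⦄ (π₀ π₁ : P ⟶ Y) (hP : IsPullback π₀ π₁ tY tY)
      ⦃I : C⦄ (r : Y ⟶ I) (ε : I ⟶ P),
      r ≫ ε = hP.lift (𝟙 Y) (𝟙 Y) rfl → D ε →
      (∀ (π : P ⟶ Y), (π = π₀ ∨ π = π₁) →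
        ∀ ⦃A : C⦄ (α : A ⟶ Y) ⦃Q : C⦄ (p : Q ⟶ A) (q : Q ⟶ I),
          IsPullback p q α (ε ≫ π) →
          ∀ (l : A ⟶ Q), l ≫ p = 𝟙 A → l ≫ q = α ≫ r → Llp D l) →
      ∀ ⦃M : C⦄ (p : M ⟶ X) (k : M ⟶ I), IsPullback p k f (ε ≫ π₀) →
      ∀ (lam : X ⟶ M), lam ≫ p = 𝟙 X → lam ≫ k = f ≫ r →
        Llp D lam ∧ D (k ≫ ε ≫ π₁) ∧ lam ≫ k ≫ ε ≫ π₁ = f := by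
  constructor
  · refine ⟨?_, ?_, rfl⟩
    · -- factorization
      intro X Y f
      haveI := hDMC.hasTerminal
      have hT : IsTerminal (⊤_ C) := terminalIsTerminal
      have htY : D (hT.from Y) := hDMC.mem_of_isTerminal _ hT
      obtain ⟨P, π₀, π₁, hP, I, r, ε, hrε, hε, hlp⟩ := hId (hT.from Y) htY
      have hπ₀ : D π₀ := hDMC.stable π₀ π₁ (hT.from Y) (hT.from Y) hP htY
      have hεπ₀ : D (ε ≫ π₀) := hSigma ε π₀ hε hπ₀
      haveI := hDMC.hasPullback (ε ≫ π₀) f hεπ₀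
      have hPb : IsPullback (pullback.fst f (ε ≫ π₀)) (pullback.snd f (ε ≫ π₀)) f (ε ≫ π₀) :=
        IsPullback.of_hasPullback _ _
      have hcomm : 𝟙 X ≫ f = (f ≫ r) ≫ ε ≫ π₀ := by
        rw [Category.id_comp, show (f ≫ r) ≫ ε ≫ π₀ = f ≫ (r ≫ ε) ≫ π₀ by simp, hrε,
          hP.lift_fst, Category.comp_id]
      obtain ⟨h1, h2, h3⟩ := key D hDMC hSigma f hT (hT.from Y) π₀ π₁ hP r ε hrε hε hlp
        (pullback.fst f (ε ≫ π₀)) (pullback.snd f (ε ≫ π₀)) hPb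
        (pullback.lift (𝟙 X) (f ≫ r) hcomm) (pullback.lift_fst _ _ _) (pullback.lift_snd _ _ _)
      exact ⟨_, _, pullback.snd f (ε ≫ π₀) ≫ ε ≫ π₁, h1, mem_bar h2, h3⟩
    · -- Llp D = Llp (Bar D)
      funext U V l
      apply propext
      constructor
      · intro hl W Z g hg
        exact hg l hl
      · intro hl W Z g hg
        exact hl g (mem_bar hg)
  · exact key D hDMC hSigma

end DMCPaper
end

section
/- Let (C, D) be a display map category which models Σ-types and Id-types. Then the class D̄ = (^⧄D)^⧄ is the retract closure of D in the arrow category C^2: a morphism of C lies in D̄ if and only if it is a retract in C^2 of a morphism of D. -/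
open CategoryTheory Limits

universe v u

namespace DMCPaper

variable {C : Type u} [Category.{v} C]

/-- `D̄ = (^⧄D)^⧄` is the retract closure of `D` in the arrow category. -/
theorem statement_3 (D : MorphismProperty C)
    (hDMC : IsDisplayMapCategory D) (hSigma : ModelsSigma D) (hId : ModelsId D) :
    ∀ ⦃X Y : C⦄ (f : X ⟶ Y),
      Bar D f ↔ ∃ (U V : C) (g : U ⟶ V), D g ∧ IsRetractOf f g 
    := by
  intro X Y f
  haveI : HasTerminal C := hDMC.hasTerminal
  constructor
  · intro hf
    -- Set up the Id-type on `g : Y ⟶ ⊤_ C`.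
    set g : Y ⟶ ⊤_ C := terminal.from Y with hgdef
    have hg : D g := hDMC.mem_of_isTerminal g terminalIsTerminal
    obtain ⟨P, π₀, π₁, hP, I, r, ε, hfact, hε, hlp⟩ := hId g hg
    have hπ₀ : D π₀ := hDMC.stable π₀ π₁ g g hP hg
    have hεπ₀ : D (ε ≫ π₀) := hSigma ε π₀ hε hπ₀
    -- The mapping path object `Q`.
    haveI hQpb : HasPullback f (ε ≫ π₀) := hDMC.hasPullback (ε ≫ π₀) f hεπ₀
    set Q := pullback f (ε ≫ π₀) with hQdef
    set p : Q ⟶ X := pullback.fst f (ε ≫ π₀) with hpdef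
    set q : Q ⟶ I := pullback.snd f (ε ≫ π₀) with hqdef
    have hQ : IsPullback p q f (ε ≫ π₀) := IsPullback.of_hasPullback f (ε ≫ π₀)
    -- The product `W = X × Y`.
    haveI hWpb : HasPullback (terminal.from X) g :=
      hDMC.hasPullback g (terminal.from X) hg
    set W := pullback (terminal.from X) g with hWdef
    set a : W ⟶ X := pullback.fst (terminal.from X) g with hadef
    set b : W ⟶ Y := pullback.snd (terminal.from X) g with hbdef
    have hW : IsPullback a b (terminal.from X) g :=
      IsPullback.of_hasPullback (terminal.from X) g
    have hb : D b := hDMC.stable b a g (terminal.from X) hW.flip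
      (hDMC.mem_of_isTerminal _ terminalIsTerminal)
    -- The map `f × 1 : W ⟶ P`.
    have hαcomm : (a ≫ f) ≫ g = b ≫ g := by
      have : f ≫ g = terminal.from X := terminal.hom_ext _ _
      rw [Category.assoc, this, hW.w]
    set αW : W ⟶ P := hP.lift (a ≫ f) b hαcomm with hαdef
    have hαfst : αW ≫ π₀ = a ≫ f := hP.lift_fst _ _ _
    have hαsnd : αW ≫ π₁ = b := hP.lift_snd _ _ _
    -- `S2 : W` is the pullback of `π₀` along `f`.
    have houter : IsPullback (αW ≫ π₁) a g (f ≫ g) := by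
      rw [hαsnd, show f ≫ g = terminal.from X from terminal.hom_ext _ _]
      exact hW.flip
    have S2 : IsPullback αW a π₀ f := houter.of_right hαfst hP.flip
    -- The map `m : Q ⟶ W`.
    have hmcomm : p ≫ terminal.from X = (q ≫ ε ≫ π₁) ≫ g := terminal.hom_ext _ _
    set m : Q ⟶ W := hW.lift p (q ≫ ε ≫ π₁) hmcomm with hmdef
    have hma : m ≫ a = p := hW.lift_fst _ _ _
    have hmb : m ≫ b = q ≫ ε ≫ π₁ := hW.lift_snd _ _ _
    have hmα : m ≫ αW = q ≫ ε := by
      apply hP.hom_ext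
      · rw [Category.assoc, hαfst, ← Category.assoc, hma, hQ.w, Category.assoc]
      · rw [Category.assoc, hαsnd, hmb, Category.assoc]
    -- `S1 : Q` is the pullback of `ε` along `αW`, so `m ∈ D`.
    have houter2 : IsPullback (m ≫ a) q f (ε ≫ π₀) := by rw [hma]; exact hQ
    have S1 : IsPullback m q αW ε := houter2.of_right hmα S2.flip
    have hm : D m := hDMC.stable m q αW ε S1 hε
    -- The display map `ρ := m ≫ b : Q ⟶ Y`.
    have hρ : D (m ≫ b) := hSigma m b hm hb
    -- The section `l : X ⟶ Q`.
    have hlcomm : 𝟙 X ≫ f = (f ≫ r) ≫ ε ≫ π₀ := by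
      rw [Category.id_comp, Category.assoc, ← Category.assoc r, hfact,
        hP.lift_fst, Category.comp_id]
    set l : X ⟶ Q := hQ.lift (𝟙 X) (f ≫ r) hlcomm with hldef
    have hlp03 : l ≫ p = 𝟙 X := hQ.lift_fst _ _ _
    have hlq : l ≫ q = f ≫ r := hQ.lift_snd _ _ _
    have hl : Llp D l := hlp π₀ (Or.inl rfl) f p q hQ l hlp03 hlq
    have hfactor : l ≫ m ≫ b = f := by
      rw [hmb, show l ≫ q ≫ ε ≫ π₁ = (l ≫ q) ≫ ε ≫ π₁ by
          simp only [Category.assoc], hlq,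
        show (f ≫ r) ≫ ε ≫ π₁ = f ≫ (r ≫ ε) ≫ π₁ by simp only [Category.assoc],
        hfact, hP.lift_snd, Category.comp_id]
    -- Retract argument.
    haveI hlift : HasLiftingProperty l f := hf l hl
    have sqc : CommSq (𝟙 X) l f (m ≫ b) := ⟨by rw [Category.id_comp, hfactor]⟩
    exact ⟨Q, Y, m ≫ b, hρ, l, 𝟙 Y, sqc.lift, 𝟙 Y,
      by rw [hfactor, Category.comp_id],
      by rw [sqc.fac_right, Category.comp_id], sqc.fac_left, Category.id_comp _⟩
  · rintro ⟨U, V, g, hg, iX, iY, rX, rY, w1, w2, w3, w4⟩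
    intro A B lm hlm
    haveI : HasLiftingProperty lm g := hlm g hg
    constructor
    intro u v sq
    have sq2 : CommSq (u ≫ iX) lm g (v ≫ iY) := ⟨by
      simp only [Category.assoc, w1]
      rw [← Category.assoc, sq.w, Category.assoc]⟩
    exact ⟨⟨⟨sq2.lift ≫ rX,
      by rw [← Category.assoc, sq2.fac_left, Category.assoc, w3, Category.comp_id],
      by rw [Category.assoc, w2, ← Category.assoc, sq2.fac_right, Category.assoc, w4,
        Category.comp_id]⟩⟩⟩

end DMCPaper
end

section
/- Let (C, D) be a display map category which models Σ-types and the formation and introduction rules of Id-types. If (C, D) models parametrized Martin-Löf Id-types, then it models Paulin-Mohring Id-types. -/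
open CategoryTheory Limits

universe v u

namespace DMCPaper

variable {C : Type u} [Category.{v} C]

/-- parametrized Martin-Löf `Id`-types yield Paulin-Mohring `Id`-types. -/
theorem statement_5 (D : MorphismProperty C)
    (hDMC : IsDisplayMapCategory D) (hSigma : ModelsSigma D)
    (hFI : ModelsFormIntro D) (hML : ModelsParamMLId D) :
    ModelsPaulinMohringId D := by
  have pb : ∀ {X Y Z : C} (f : X ⟶ Z) (g : Y ⟶ Z), D g →
      ∃ (W : C) (a : W ⟶ X) (b : W ⟶ Y), IsPullback a b f g := by
    intro X Y Z f g hgD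
    haveI := hDMC.hasPullback g f hgD
    exact ⟨_, _, _, IsPullback.of_hasPullback f g⟩
  intro A Γ d hd
  obtain ⟨P, π₀, π₁, hP, I, r, ε, hfact, hε, clause⟩ := hML d hd
  refine ⟨P, π₀, π₁, hP, I, r, ε, hfact, hε, ?_⟩
  intro π hπ Δ σ Q p q hQ l hlp hlq
  -- basic facts
  have hrε0 : r ≫ ε ≫ π₀ = 𝟙 A := by
    rw [← Category.assoc, hfact, hP.lift_fst]
  have hrε1 : r ≫ ε ≫ π₁ = 𝟙 A := by
    rw [← Category.assoc, hfact, hP.lift_snd]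
  have hDπ : D π := by
    rcases hπ with rfl | rfl
    · exact hDMC.stable _ _ d d hP hd
    · exact hDMC.stable _ _ d d hP.flip hd
  have hπd : π ≫ d = π₀ ≫ d := by
    rcases hπ with rfl | rfl
    · rfl
    · exact hP.w.symm
  have hrεπ : r ≫ ε ≫ π = 𝟙 A := by rcases hπ with rfl | rfl <;> assumption
  have hrε0' := reassoc_of% hrε0
  have hDεπ : D (ε ≫ π) := hSigma ε π hε hDπ
  have hDεπ₀d : D (ε ≫ π₀ ≫ d) :=
    hSigma ε (π₀ ≫ d) hε (hSigma π₀ d (hDMC.stable π₀ π₁ d d hP hd) hd)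
  have hlp' := reassoc_of% hlp
  -- pulled back context over Δ
  obtain ⟨A₀, pA, qA, hA₀⟩ := pb (σ ≫ d) d hd
  obtain ⟨Q', pI, qI, hQ'⟩ := pb (σ ≫ d) (ε ≫ π₀ ≫ d) hDεπ₀d
  have hm_w : pA ≫ σ ≫ d = (qA ≫ r) ≫ ε ≫ π₀ ≫ d := by
    simp only [Category.assoc, hrε0']
    exact hA₀.w
  set m : A₀ ⟶ Q' := hQ'.lift pA (qA ≫ r) hm_w with hm_def
  have hm1 : m ≫ pI = pA := hQ'.lift_fst _ _ _
  have hm2 : m ≫ qI = qA ≫ r := hQ'.lift_snd _ _ _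
  have hm2' := reassoc_of% hm2
  set s : Δ ⟶ A₀ := hA₀.lift (𝟙 Δ) σ (by simp) with hs_def
  have hs1 : s ≫ pA = 𝟙 Δ := hA₀.lift_fst _ _ _
  have hs2 : s ≫ qA = σ := hA₀.lift_snd _ _ _
  have hs2' := reassoc_of% hs2
  have hQw' := reassoc_of% hQ.w
  have hθb_w : p ≫ σ ≫ d = q ≫ ε ≫ π₀ ≫ d := by
    rw [hQw' d, hπd]
  set θb : Q ⟶ Q' := hQ'.lift p q hθb_w with hθb_def
  have hθb1 : θb ≫ pI = p := hQ'.lift_fst _ _ _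
  have hθb2 : θb ≫ qI = q := hQ'.lift_snd _ _ _
  have hθπ_w : pI ≫ σ ≫ d = (qI ≫ ε ≫ π) ≫ d := by
    simp only [Category.assoc, hπd]
    exact hQ'.w
  set θπ : Q' ⟶ A₀ := hA₀.lift pI (qI ≫ ε ≫ π) hθπ_w with hθπ_def
  have hθπ1 : θπ ≫ pA = pI := hA₀.lift_fst _ _ _
  have hθπ2 : θπ ≫ qA = qI ≫ ε ≫ π := hA₀.lift_snd _ _ _
  have e_mθ : m ≫ θπ = 𝟙 A₀ := by
    apply hA₀.hom_ext
    · simp only [Category.assoc, hθπ1, hm1, Category.id_comp]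
    · simp only [Category.assoc, hθπ2, hm2', hrεπ, Category.comp_id, Category.id_comp]
  have e_mθ' := reassoc_of% e_mθ
  have e_θbθπ : θb ≫ θπ = p ≫ s := by
    apply hA₀.hom_ext
    · simp only [Category.assoc, hθπ1, hθb1, hs1, Category.comp_id]
    · simp only [Category.assoc, hθπ2, hθb2, hs2, hQ.w]
      rw [← Category.assoc, hθb2]
  have e_θbθπ' := reassoc_of% e_θbθπ
  have e_lθb : l ≫ θb = s ≫ m := by
    apply hQ'.hom_ext
    · simp only [Category.assoc, hθb1, hlp, hm1, hs1]
    · simp only [Category.assoc, hθb2, hlq, hm2, hs2']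
  have e_lθb' := reassoc_of% e_lθb
  -- θπ is a display map
  have hθπpb_pre : IsPullback qI θπ (ε ≫ π) qA := by
    refine IsPullback.of_bot ?_ hθπ2.symm hA₀.flip
    rw [hθπ1, show (ε ≫ π) ≫ d = ε ≫ π₀ ≫ d by simp only [Category.assoc, hπd]]
    exact hQ'.flip
  have hDθπ : D θπ := hDMC.stable θπ qI qA (ε ≫ π) hθπpb_pre.flip hDεπ
  -- Q is the pullback of θπ along s
  have hQs : IsPullback p θb s θπ := by
    refine (IsPullback.of_right ?_ e_θbθπ hθπpb_pre).flip
    rw [hθb2, hs2]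
    exact hQ.flip
  -- the Id-type of θπ
  obtain ⟨P₂, ϖ₀, ϖ₁, hP₂, I₂, r₂, ε₂, hfact₂, hε₂, clause₂⟩ := hML θπ hDθπ
  have h2a : r₂ ≫ ε₂ ≫ ϖ₀ = 𝟙 Q' := by
    rw [← Category.assoc, hfact₂, hP₂.lift_fst]
  have h2b : r₂ ≫ ε₂ ≫ ϖ₁ = 𝟙 Q' := by
    rw [← Category.assoc, hfact₂, hP₂.lift_snd]
  have h2a' := reassoc_of% h2a
  have h2b' := reassoc_of% h2b
  have hD3 : D (ε₂ ≫ ϖ₀ ≫ θπ) :=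
    hSigma ε₂ (ϖ₀ ≫ θπ) hε₂ (hSigma ϖ₀ θπ (hDMC.stable ϖ₀ ϖ₁ θπ θπ hP₂ hDθπ) hDθπ)
  obtain ⟨QB, pI', qI', hQB⟩ := pb s (ε₂ ≫ ϖ₀ ≫ θπ) hD3
  have hQBw' := reassoc_of% hQB.w
  have hmh_w : p ≫ s = (θb ≫ r₂) ≫ ε₂ ≫ ϖ₀ ≫ θπ := by
    simp only [Category.assoc, h2a']
    exact e_θbθπ.symm
  set mh : Q ⟶ QB := hQB.lift p (θb ≫ r₂) hmh_w with hmh_def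
  have hmh1 : mh ≫ pI' = p := hQB.lift_fst _ _ _
  have hmh2 : mh ≫ qI' = θb ≫ r₂ := hQB.lift_snd _ _ _
  have hmh2' := reassoc_of% hmh2
  obtain ⟨hLmh, param⟩ :=
    clause₂ s p θb hQs pI' qI' hQB mh hmh1 hmh2
  obtain ⟨hLm, -⟩ := clause (σ ≫ d) pA qA hA₀ pI qI hQ' m hm1 hm2
  -- contraction of singletons
  have hφ_w : (θπ ≫ m) ≫ θπ = 𝟙 Q' ≫ θπ := by
    simp only [Category.assoc, e_mθ, Category.comp_id, Category.id_comp]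
  set φ : Q' ⟶ P₂ := hP₂.lift (θπ ≫ m) (𝟙 Q') hφ_w with hφ_def
  have hφ0 : φ ≫ ϖ₀ = θπ ≫ m := hP₂.lift_fst _ _ _
  have hφ1 : φ ≫ ϖ₁ = 𝟙 Q' := hP₂.lift_snd _ _ _
  have hφ0' := reassoc_of% hφ0
  have hφ1' := reassoc_of% hφ1
  obtain ⟨X, x₁, x₂, hX⟩ := pb φ ε₂ hε₂
  have hDx₁ : D x₁ := hDMC.stable x₁ x₂ φ ε₂ hX hε₂
  have hpσ_w : m ≫ φ = (m ≫ r₂) ≫ ε₂ := by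
    apply hP₂.hom_ext
    · simp only [Category.assoc, hφ0, e_mθ', h2a, h2a', Category.comp_id]
    · simp only [Category.assoc, hφ1, h2b, h2b', Category.comp_id]
  set pσ : A₀ ⟶ X := hX.lift m (m ≫ r₂) hpσ_w with hpσ_def
  have hpσ1 : pσ ≫ x₁ = m := hX.lift_fst _ _ _
  have hpσ2 : pσ ≫ x₂ = m ≫ r₂ := hX.lift_snd _ _ _
  haveI := hLm x₁ hDx₁
  have sqH : CommSq pσ m x₁ (𝟙 Q') := ⟨by rw [hpσ1, Category.comp_id]⟩
  obtain ⟨H, hHε, hmH⟩ : ∃ H : Q' ⟶ I₂, H ≫ ε₂ = φ ∧ m ≫ H = m ≫ r₂ := by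
    refine ⟨sqH.lift ≫ x₂, ?_, ?_⟩
    · rw [Category.assoc, ← hX.w, ← Category.assoc, sqH.fac_right, Category.id_comp]
    · rw [← Category.assoc, sqH.fac_left, hpσ2]
  have hHε' := reassoc_of% hHε
  -- the contraction K of Q
  have hK_w : p ≫ s = (θb ≫ H) ≫ ε₂ ≫ ϖ₀ ≫ θπ := by
    simp only [Category.assoc, hHε', hφ0', e_mθ, Category.comp_id, e_θbθπ]
  set K : Q ⟶ QB := hQB.lift p (θb ≫ H) hK_w with hK_def
  have hK1 : K ≫ pI' = p := hQB.lift_fst _ _ _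
  have hK2 : K ≫ qI' = θb ≫ H := hQB.lift_snd _ _ _
  have hK2' := reassoc_of% hK2
  -- the two endpoint maps QB ⟶ Q
  have hP₂w' := reassoc_of% hP₂.w
  have hE0_w : pI' ≫ σ = (qI' ≫ ε₂ ≫ ϖ₀ ≫ qI) ≫ ε ≫ π := by
    simp only [Category.assoc]
    rw [← hθπ2, ← hQBw', hs2]
  set E0 : QB ⟶ Q := hQ.lift pI' (qI' ≫ ε₂ ≫ ϖ₀ ≫ qI) hE0_w with hE0_def
  have hE0p : E0 ≫ p = pI' := hQ.lift_fst _ _ _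
  have hE0q : E0 ≫ q = qI' ≫ ε₂ ≫ ϖ₀ ≫ qI := hQ.lift_snd _ _ _
  have hE1_w : pI' ≫ σ = (qI' ≫ ε₂ ≫ ϖ₁ ≫ qI) ≫ ε ≫ π := by
    simp only [Category.assoc]
    rw [← hθπ2, ← hP₂w', ← hQBw', hs2]
  set E1 : QB ⟶ Q := hQ.lift pI' (qI' ≫ ε₂ ≫ ϖ₁ ≫ qI) hE1_w with hE1_def
  have hE1p : E1 ≫ p = pI' := hQ.lift_fst _ _ _
  have hE1q : E1 ≫ q = qI' ≫ ε₂ ≫ ϖ₁ ≫ qI := hQ.lift_snd _ _ _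
  have hmhE0 : mh ≫ E0 = 𝟙 Q := by
    apply hQ.hom_ext
    · simp only [Category.assoc, hE0p, hmh1, Category.id_comp]
    · simp only [Category.assoc, hE0q, hmh2', h2a', hθb2, Category.id_comp]
  have hmhE1 : mh ≫ E1 = 𝟙 Q := by
    apply hQ.hom_ext
    · simp only [Category.assoc, hE1p, hmh1, Category.id_comp]
    · simp only [Category.assoc, hE1q, hmh2', h2b', hθb2, Category.id_comp]
  have hmhE0' := reassoc_of% hmhE0
  have hKE0 : K ≫ E0 = p ≫ l := by
    apply hQ.hom_ext
    · simp only [Category.assoc, hE0p, hK1, hlp, Category.comp_id]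
    · simp only [Category.assoc, hE0q, hK2', hHε', hφ0', hm2, e_θbθπ', hs2', hlq]
  have hKE1 : K ≫ E1 = 𝟙 Q := by
    apply hQ.hom_ext
    · simp only [Category.assoc, hE1p, hK1, Category.id_comp]
    · simp only [Category.assoc, hE1q, hK2', hHε', hφ1', hθb2, Category.id_comp]
  have hKE1' := reassoc_of% hKE1
  have hlK : l ≫ K = l ≫ mh := by
    apply hQB.hom_ext
    · simp only [Category.assoc, hK1, hmh1]
    · simp only [Category.assoc, hK2, hK2', hmh2, hmh2', e_lθb', hmH]
  -- solving the lifting problem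
  intro U V g hg
  constructor
  intro f h sq0
  obtain ⟨Ut, gt, u₂, hUt⟩ := pb h g hg
  have hDgt : D gt := hDMC.stable gt u₂ h g hUt hg
  set ft : Δ ⟶ Ut := hUt.lift l f sq0.w.symm with hft_def
  have hft1 : ft ≫ gt = l := hUt.lift_fst _ _ _
  have hft1' := reassoc_of% hft1
  have hft2 : ft ≫ u₂ = f := hUt.lift_snd _ _ _
  obtain ⟨Θ, t₁, t₂, hΘ⟩ := pb E0 gt hDgt
  have hΘw' := reassoc_of% hΘ.w
  have hDt₁ : D t₁ := hDMC.stable t₁ t₂ E0 gt hΘ hDgt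
  have he₁_w : (gt ≫ mh) ≫ E0 = 𝟙 Ut ≫ gt := by
    simp only [Category.assoc, hmhE0, Category.comp_id, Category.id_comp]
  set e₁ : Ut ⟶ Θ := hΘ.lift (gt ≫ mh) (𝟙 Ut) he₁_w with he₁_def
  have he₁1 : e₁ ≫ t₁ = gt ≫ mh := hΘ.lift_fst _ _ _
  have he₁1' := reassoc_of% he₁1
  have he₁2 : e₁ ≫ t₂ = 𝟙 Ut := hΘ.lift_snd _ _ _
  obtain ⟨P₀, k₁, k₂, hP₀⟩ := pb mh t₁ hDt₁
  have hP₀w' := reassoc_of% hP₀.w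
  have hLk₂ : Llp D k₂ := param t₁ hDt₁ k₂ k₁ hP₀.flip
  set φ₀ : Ut ⟶ P₀ := hP₀.lift gt e₁ he₁1.symm with hφ₀_def
  have hφ₀1 : φ₀ ≫ k₁ = gt := hP₀.lift_fst _ _ _
  have hφ₀2 : φ₀ ≫ k₂ = e₁ := hP₀.lift_snd _ _ _
  have hk₂t₂e₁ : k₂ ≫ t₂ ≫ e₁ = k₂ ≫ 𝟙 Θ := by
    apply hΘ.hom_ext
    · simp only [Category.assoc, he₁1, ← hΘw', ← hP₀w', hmhE0', hP₀.w,
        Category.id_comp, Category.comp_id]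
    · simp only [Category.assoc, he₁2, Category.comp_id]
  have hiso1 : φ₀ ≫ k₂ ≫ t₂ = 𝟙 Ut := by
    rw [← Category.assoc, hφ₀2, he₁2]
  have hiso2 : (k₂ ≫ t₂) ≫ φ₀ = 𝟙 P₀ := by
    apply hP₀.hom_ext
    · simp only [Category.assoc, hφ₀1, ← hΘ.w, ← hP₀w', hmhE0, Category.comp_id,
        Category.id_comp]
    · simp only [Category.assoc, hφ₀2, Category.id_comp]
      simpa using hk₂t₂e₁
  have hLe₁ : Llp D e₁ := by
    intro W Z w hw
    haveI : IsIso φ₀ := ⟨k₂ ≫ t₂, hiso1, hiso2⟩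
    haveI := hLk₂ w hw
    rw [show e₁ = φ₀ ≫ k₂ from hφ₀2.symm]
    infer_instance
  obtain ⟨Yt, y₁, y₂, hYt⟩ := pb (t₁ ≫ E1) gt hDgt
  have hYtw' := reassoc_of% hYt.w
  have hDy₁ : D y₁ := hDMC.stable y₁ y₂ (t₁ ≫ E1) gt hYt hDgt
  have hχ_w : e₁ ≫ t₁ ≫ E1 = 𝟙 Ut ≫ gt := by
    simp only [Category.assoc, he₁1', hmhE1, Category.comp_id, Category.id_comp]
  set χ₀ : Ut ⟶ Yt := hYt.lift e₁ (𝟙 Ut) hχ_w with hχ_def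
  have hχ1 : χ₀ ≫ y₁ = e₁ := hYt.lift_fst _ _ _
  have hχ2 : χ₀ ≫ y₂ = 𝟙 Ut := hYt.lift_snd _ _ _
  have hχ2' := reassoc_of% hχ2
  haveI := hLe₁ y₁ hDy₁
  have sqT : CommSq χ₀ e₁ y₁ (𝟙 Θ) := ⟨by rw [hχ1, Category.comp_id]⟩
  have sqTl' := reassoc_of% sqT.fac_left
  have sqTr' := reassoc_of% sqT.fac_right
  have ht_w : K ≫ E0 = (p ≫ ft) ≫ gt := by
    simp only [Category.assoc, hft1, hKE0]
  set t : Q ⟶ Θ := hΘ.lift K (p ≫ ft) ht_w with ht_def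
  have ht1 : t ≫ t₁ = K := hΘ.lift_fst _ _ _
  have ht1' := reassoc_of% ht1
  have ht2 : t ≫ t₂ = p ≫ ft := hΘ.lift_snd _ _ _
  have hlt : l ≫ t = ft ≫ e₁ := by
    apply hΘ.hom_ext
    · simp only [Category.assoc, ht1, he₁1, hlK, hft1']
    · simp only [Category.assoc, ht2, he₁2, hlp', Category.comp_id]
  have hlt' := reassoc_of% hlt
  refine CommSq.HasLift.mk' ⟨t ≫ sqT.lift ≫ y₂ ≫ u₂, ?_, ?_⟩
  · simp only [hlt', sqTl', hχ2', hft2]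
  · simp only [Category.assoc, ← hUt.w, ← hYtw', sqTr', ht1', hKE1']

end DMCPaper
end

section
/- Let (C, D) be a display map category which models Σ-types and the formation and introduction rules of Id-types. If (C, D) models Paulin-Mohring Id-types and the class ^⧄D is stable under pullback along morphisms of D, then (C, D) models parametrized Martin-Löf Id-types. -/
open CategoryTheory Limits

universe v u

namespace DMCPaper

variable {C : Type u} [Category.{v} C]

/-- Paulin-Mohring `Id`-types plus stability of `^⧄D` under pullback
along `D` yield parametrized Martin-Löf `Id`-types. -/
theorem statement_6 (D : MorphismProperty C)
    (hDMC : IsDisplayMapCategory D) (hSigma : ModelsSigma D)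
    (hFI : ModelsFormIntro D) (hPM : ModelsPaulinMohringId D)
    (hstable : LlpStableUnderPullbackAlongD D) :
    ModelsParamMLId D := by
  intro A Γ d hd
  obtain ⟨P, π₀, π₁, hP, I, r, ε, hfact, hε, hlp⟩ := hPM d hd
  refine ⟨P, π₀, π₁, hP, I, r, ε, hfact, hε, ?_⟩
  intro Δ σ A₀ pA qA hA₀ Q pI qI hQ m hm1 hm2
  -- the induced map p' : Q ⟶ A₀
  have hw : pI ≫ σ = (qI ≫ ε ≫ π₀) ≫ d := by
    have := hQ.w
    simp only [Category.assoc] at this ⊢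
    exact this
  set p' : Q ⟶ A₀ := hA₀.lift pI (qI ≫ ε ≫ π₀) hw with hp'
  have hp'fst : p' ≫ pA = pI := hA₀.lift_fst _ _ _
  have hp'snd : p' ≫ qA = qI ≫ ε ≫ π₀ := hA₀.lift_snd _ _ _
  -- the top square is a pullback
  have hs : IsPullback qI (p' ≫ pA) ((ε ≫ π₀) ≫ d) σ := by
    rw [hp'fst]
    have := hQ.flip
    simpa only [Category.assoc] using this
  have htop : IsPullback p' qI qA (ε ≫ π₀) :=
    (IsPullback.of_bot hs (by rw [hp'snd]) hA₀.flip).flip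
  -- m is a section of p'
  have hm1' : m ≫ p' = 𝟙 A₀ := by
    apply hA₀.hom_ext
    · rw [Category.assoc, hp'fst, hm1, Category.id_comp]
    · rw [Category.assoc, hp'snd, Category.id_comp]
      have : m ≫ qI ≫ ε ≫ π₀ = qA ≫ (r ≫ ε) ≫ π₀ := by
        simp only [← Category.assoc, hm2]
      rw [this, hfact]
      simp [hP.lift_fst]
  have hm2' : m ≫ qI = qA ≫ r := hm2
  have hLlpm : Llp D m := hlp π₀ (Or.inl rfl) qA p' qI htop m hm1' hm2'
  refine ⟨hLlpm, ?_⟩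
  intro Θ θ hθ E e₁ e₂ hE
  exact hstable e₁ e₂ θ m hE hθ hLlpm


end DMCPaper
end
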